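/- arXiv:2009.07269 — 3 statements merged into one kernel-verified Lean document; each statement's English description precedes it below -/
import Mathlib

section
/- Let v_1,…,v_r be an orthonormal basis of ℝ^r, let φ(z) = ∏_{i=1}^r ⟨v_i, z⟩, and define the Kelvin transform K[f](z) = φ(z)·f( Σ_{i=1}^r ⟨v_i,z⟩^{-1} v_i ). Then for any polynomial p ∈ ℝ[z_1,…,z_r], the apolar (orthogonal) projection of p onto the subspace of polynomials q satisfying ⟨v_i,∂⟩² q = 0 for all i equals K[p(∂)φ]. Equivalently, writing p in the monomial basis of the coordinates ⟨v_i,z⟩, this projection is the multilinear part of p. -/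
open scoped BigOperators

/-- The differential operator `q(∂)` applied to `r`. -/
noncomputable def diffOp {N : ℕ} (q r : MvPolynomial (Fin N) ℝ) : MvPolynomial (Fin N) ℝ :=
  ∑ μ ∈ q.support, ∑ ν ∈ r.support,
    MvPolynomial.monomial (ν - μ)
      ((q.coeff μ * r.coeff ν) * ∏ i : Fin N, ((ν i).descFactorial (μ i) : ℝ))

/-- The linear form `⟨v_i, z⟩` as a polynomial. -/
noncomputable def linForm {r : ℕ} (v : Fin r → Fin r → ℝ) (i : Fin r) :
    MvPolynomial (Fin r) ℝ :=
  ∑ j : Fin r, MvPolynomial.C (v i j) * MvPolynomial.X j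

namespace ApolarAux

open MvPolynomial Finsupp

variable {N : ℕ}

/-- The single differential operator `∂^μ`. -/
noncomputable def apD (μ : Fin N →₀ ℕ) (f : MvPolynomial (Fin N) ℝ) : MvPolynomial (Fin N) ℝ :=
  ∑ ν ∈ f.support, monomial (ν - μ) (f.coeff ν * ∏ i : Fin N, ((ν i).descFactorial (μ i) : ℝ))

lemma coeff_apD (μ τ : Fin N →₀ ℕ) (f : MvPolynomial (Fin N) ℝ) :
    coeff τ (apD μ f) =
      f.coeff (τ + μ) * ∏ i : Fin N, (((τ + μ) i).descFactorial (μ i) : ℝ) := by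
  unfold apD
  rw [coeff_sum]
  have : ∀ ν ∈ f.support, ν ≠ τ + μ →
      coeff τ (monomial (ν - μ) (f.coeff ν * ∏ i : Fin N, ((ν i).descFactorial (μ i) : ℝ))) = 0 := by
    intro ν _ hne
    rw [coeff_monomial]
    split_ifs with h
    · -- ν - μ = τ but ν ≠ τ + μ, so ¬ μ ≤ ν, so some descFactorial is 0
      have hnle : ¬ μ ≤ ν := by
        intro hle
        exact hne (by rw [← h, tsub_add_cancel_of_le hle])
      rw [Finsupp.le_iff] at hnle
      push_neg at hnle
      obtain ⟨i, _, hi⟩ := hnle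
      have : ((ν i).descFactorial (μ i) : ℝ) = 0 := by
        norm_cast
        exact Nat.descFactorial_eq_zero_iff_lt.mpr hi
      rw [Finset.prod_eq_zero (Finset.mem_univ i) this, mul_zero]
    · rfl
  rw [Finset.sum_eq_single (τ + μ) this]
  · rw [coeff_monomial, if_pos (add_tsub_cancel_right τ μ)]
  · intro hns
    rw [MvPolynomial.notMem_support_iff] at hns
    rw [hns, zero_mul, coeff_monomial]
    split_ifs <;> simp

lemma apD_add (μ : Fin N →₀ ℕ) (f g : MvPolynomial (Fin N) ℝ) :
    apD μ (f + g) = apD μ f + apD μ g := by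
  apply MvPolynomial.ext; intro τ
  simp [coeff_apD, coeff_add, add_mul]

lemma apD_smul (μ : Fin N →₀ ℕ) (c : ℝ) (f : MvPolynomial (Fin N) ℝ) :
    apD μ (c • f) = c • apD μ f := by
  apply MvPolynomial.ext; intro τ
  simp [coeff_apD, coeff_smul, mul_assoc]

lemma apD_zero (μ : Fin N →₀ ℕ) : apD μ (0 : MvPolynomial (Fin N) ℝ) = 0 := by
  apply MvPolynomial.ext; intro τ; simp [coeff_apD]

lemma apD_monomial (μ ν : Fin N →₀ ℕ) (c : ℝ) :
    apD μ (monomial ν c) =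
      monomial (ν - μ) (c * ∏ i : Fin N, ((ν i).descFactorial (μ i) : ℝ)) := by
  apply MvPolynomial.ext; intro τ
  rw [coeff_apD, coeff_monomial, coeff_monomial]
  by_cases hle : μ ≤ ν
  · by_cases h : ν = τ + μ
    · subst h
      rw [if_pos rfl, if_pos (add_tsub_cancel_right τ μ)]
    · rw [if_neg h, if_neg, zero_mul]
      intro hc
      exact h (by rw [← hc, tsub_add_cancel_of_le hle])
  · have hz : (∏ i : Fin N, ((ν i).descFactorial (μ i) : ℝ)) = 0 := by
      rw [Finsupp.le_iff] at hle
      push_neg at hle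
      obtain ⟨i, _, hi⟩ := hle
      refine Finset.prod_eq_zero (Finset.mem_univ i) ?_
      norm_cast
      exact Nat.descFactorial_eq_zero_iff_lt.mpr hi
    have hne : ν ≠ τ + μ := by
      intro h
      exact hle (by rw [h]; exact le_add_self)
    rw [if_neg hne, zero_mul]
    split_ifs with h
    · rw [hz, mul_zero]
    · rfl

lemma diffOp_eq (q f : MvPolynomial (Fin N) ℝ) :
    diffOp q f = ∑ μ ∈ q.support, q.coeff μ • apD μ f := by
  unfold diffOp apD
  refine Finset.sum_congr rfl fun μ _ => ?_
  rw [Finset.smul_sum]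
  refine Finset.sum_congr rfl fun ν _ => ?_
  rw [MvPolynomial.smul_monomial, smul_eq_mul, mul_assoc]

end ApolarAux
namespace ApolarAux
open MvPolynomial Finsupp
variable {N : ℕ}

lemma descFactorial_add' (n b : ℕ) : ∀ a : ℕ,
    n.descFactorial (b + a) = n.descFactorial b * (n - b).descFactorial a := by
  intro a
  induction a with
  | zero => simp
  | succ a ih =>
    rw [← Nat.add_assoc, Nat.descFactorial_succ, Nat.descFactorial_succ, ih,
      Nat.sub_sub]
    ring

lemma apD_comp (μ ν : Fin N →₀ ℕ) (f : MvPolynomial (Fin N) ℝ) :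
    apD μ (apD ν f) = apD (μ + ν) f := by
  apply MvPolynomial.ext; intro τ
  rw [coeff_apD, coeff_apD, coeff_apD]
  have harr : τ + μ + ν = τ + (μ + ν) := by rw [add_assoc]
  rw [harr, mul_assoc, ← Finset.prod_mul_distrib]
  congr 1
  refine Finset.prod_congr rfl fun i _ => ?_
  have h1 : (τ + (μ + ν)) i = (τ + μ) i + ν i := by
    simp [Finsupp.add_apply, Nat.add_assoc]
  rw [h1]
  norm_cast
  rw [Finsupp.add_apply μ ν i, Nat.add_comm (μ i) (ν i), descFactorial_add' _ (ν i) (μ i)]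
  congr 2
  omega

lemma diffOp_monomial_left (μ : Fin N →₀ ℕ) (c : ℝ) (f : MvPolynomial (Fin N) ℝ) :
    diffOp (monomial μ c) f = c • apD μ f := by
  rw [diffOp_eq]
  by_cases hc : c = 0
  · simp [hc, MvPolynomial.support_monomial]
  · rw [MvPolynomial.support_monomial, if_neg hc, Finset.sum_singleton, coeff_monomial,
      if_pos rfl]

lemma diffOp_add_left (q q' f : MvPolynomial (Fin N) ℝ) :
    diffOp (q + q') f = diffOp q f + diffOp q' f := by
  rw [diffOp_eq, diffOp_eq, diffOp_eq]
  have h1 : ∀ g : MvPolynomial (Fin N) ℝ,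
      (∑ μ ∈ g.support, g.coeff μ • apD μ f) = (AddMonoidAlgebra.coeff g).sum fun μ c => c • apD μ f := fun g => rfl
  rw [h1, h1, h1, AddMonoidAlgebra.coeff_add]
  exact Finsupp.sum_add_index (by intros; simp) (by intros; rw [add_smul])

lemma diffOp_zero_left (f : MvPolynomial (Fin N) ℝ) :
    diffOp (0 : MvPolynomial (Fin N) ℝ) f = 0 := by
  rw [diffOp_eq]; simp

lemma diffOp_add_right (q f g : MvPolynomial (Fin N) ℝ) :
    diffOp q (f + g) = diffOp q f + diffOp q g := by
  rw [diffOp_eq, diffOp_eq, diffOp_eq, ← Finset.sum_add_distrib]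
  refine Finset.sum_congr rfl fun μ _ => ?_
  rw [apD_add, smul_add]

lemma diffOp_zero_right (q : MvPolynomial (Fin N) ℝ) :
    diffOp q (0 : MvPolynomial (Fin N) ℝ) = 0 := by
  rw [diffOp_eq]
  refine Finset.sum_eq_zero fun μ _ => ?_
  rw [apD_zero, smul_zero]

lemma diffOp_smul_right (q : MvPolynomial (Fin N) ℝ) (c : ℝ) (f : MvPolynomial (Fin N) ℝ) :
    diffOp q (c • f) = c • diffOp q f := by
  rw [diffOp_eq, diffOp_eq, Finset.smul_sum]
  refine Finset.sum_congr rfl fun μ _ => ?_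
  rw [apD_smul, smul_comm]

lemma diffOp_mul_left (q q' f : MvPolynomial (Fin N) ℝ) :
    diffOp (q * q') f = diffOp q (diffOp q' f) := by
  induction q using MvPolynomial.induction_on' with
  | add p₁ p₂ ih1 ih2 => rw [add_mul, diffOp_add_left, diffOp_add_left, ih1, ih2]
  | monomial μ c =>
    induction q' using MvPolynomial.induction_on' with
    | add p₁ p₂ ih1 ih2 =>
      rw [mul_add, diffOp_add_left, ih1, ih2, ← diffOp_add_right, ← diffOp_add_left]
    | monomial ν d =>
      rw [monomial_mul, diffOp_monomial_left, diffOp_monomial_left, diffOp_monomial_left,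
        apD_smul, apD_comp, mul_smul, smul_comm c d]

lemma apD_single_one (k : Fin N) (f : MvPolynomial (Fin N) ℝ) :
    apD (Finsupp.single k 1) f = pderiv k f := by
  induction f using MvPolynomial.induction_on' with
  | add p₁ p₂ ih1 ih2 => rw [apD_add, map_add, ih1, ih2]
  | monomial ν c =>
    rw [apD_monomial, pderiv_monomial]
    congr 1
    rw [Finset.prod_eq_single k (fun i _ hne => by simp [Finsupp.single_apply, hne.symm])
      (fun h => absurd (Finset.mem_univ k) h)]
    simp [Finsupp.single_apply]

lemma apD_zero_eq (f : MvPolynomial (Fin N) ℝ) : apD (0 : Fin N →₀ ℕ) f = f := by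
  apply MvPolynomial.ext; intro τ
  simp [coeff_apD]

end ApolarAux
namespace ApolarAux
open MvPolynomial Finsupp

variable {r : ℕ} (v : Fin r → Fin r → ℝ)

/-- Substitution by the linear forms. -/
noncomputable def T : MvPolynomial (Fin r) ℝ →ₐ[ℝ] MvPolynomial (Fin r) ℝ :=
  aeval (linForm v)

lemma T_X (i : Fin r) : T v (X i) = linForm v i := aeval_X _ i

lemma pderiv_linForm (k : Fin r) (i : Fin r) :
    pderiv k (linForm v i) = C (v i k) := by
  unfold linForm
  rw [map_sum]
  rw [Finset.sum_eq_single k (fun j _ hne => ?_) (fun h => absurd (Finset.mem_univ k) h)]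
  · rw [pderiv_mul, pderiv_C, zero_mul, pderiv_X_self, mul_one, zero_add]
  · rw [pderiv_mul, pderiv_C, zero_mul, pderiv_X_of_ne hne, mul_zero, zero_add]

lemma chain (horth : ∀ i j : Fin r, (∑ k : Fin r, v i k * v j k) = if i = j then (1 : ℝ) else 0)
    (i : Fin r) (f : MvPolynomial (Fin r) ℝ) :
    (∑ k : Fin r, v i k • pderiv k (T v f)) = T v (pderiv i f) := by
  induction f using MvPolynomial.induction_on with
  | C a => simp [pderiv_C]
  | add p q ihp ihq =>
    rw [map_add, map_add, map_add, ← ihp, ← ihq, ← Finset.sum_add_distrib]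
    refine Finset.sum_congr rfl fun k _ => ?_
    rw [map_add, smul_add]
  | mul_X p n ihp =>
    rw [map_mul, T_X]
    have expand : ∀ k : Fin r, pderiv k (T v p * linForm v n) =
        pderiv k (T v p) * linForm v n + T v p * C (v n k) := by
      intro k; rw [pderiv_mul, pderiv_linForm]
    simp only [expand, smul_add, Finset.sum_add_distrib]
    have h1 : (∑ k : Fin r, v i k • (pderiv k (T v p) * linForm v n)) =
        T v (pderiv i p) * linForm v n := by
      rw [← ihp, Finset.sum_mul]
      refine Finset.sum_congr rfl fun k _ => ?_
      rw [smul_mul_assoc]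
    have h2 : (∑ k : Fin r, v i k • (T v p * C (v n k))) =
        (if i = n then T v p else 0) := by
      have e1 : ∀ k : Fin r, v i k • (T v p * C (v n k)) = (v i k * v n k) • T v p := by
        intro k
        rw [mul_comm (T v p), ← smul_eq_C_mul, smul_smul]
      simp only [e1, ← Finset.sum_smul, horth i n]
      split_ifs
      · rw [one_smul]
      · rw [zero_smul]
    rw [h1, h2, pderiv_mul]
    by_cases hin : i = n
    · subst hin
      rw [pderiv_X_self, mul_one, if_pos rfl, map_add, map_mul, T_X]
    · rw [pderiv_X_of_ne (Ne.symm hin), mul_zero, add_zero, map_mul, T_X, if_neg hin, add_zero]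

end ApolarAux

namespace ApolarAux
open MvPolynomial Finsupp
variable {r : ℕ} (v : Fin r → Fin r → ℝ)

lemma diffOp_sum_left {α : Type*} (s : Finset α) (q : α → MvPolynomial (Fin r) ℝ)
    (f : MvPolynomial (Fin r) ℝ) :
    diffOp (∑ j ∈ s, q j) f = ∑ j ∈ s, diffOp (q j) f := by
  classical
  induction s using Finset.induction_on with
  | empty => simp [diffOp_zero_left]
  | insert _ _ hns ih =>
    rw [Finset.sum_insert hns, Finset.sum_insert hns, diffOp_add_left, ih]

lemma diffOp_linForm (i : Fin r) (g : MvPolynomial (Fin r) ℝ) :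
    diffOp (linForm v i) g = ∑ k : Fin r, v i k • pderiv k g := by
  unfold linForm
  rw [diffOp_sum_left]
  refine Finset.sum_congr rfl fun k _ => ?_
  rw [C_mul_X_eq_monomial, diffOp_monomial_left, apD_single_one]

lemma diffOp_X (n : Fin r) (f : MvPolynomial (Fin r) ℝ) :
    diffOp (X n) f = pderiv n f := by
  have : (X n : MvPolynomial (Fin r) ℝ) = monomial (Finsupp.single n 1) 1 := rfl
  rw [this, diffOp_monomial_left, one_smul, apD_single_one]

lemma equiv (horth : ∀ i j : Fin r, (∑ k : Fin r, v i k * v j k) = if i = j then (1 : ℝ) else 0)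
    (q f : MvPolynomial (Fin r) ℝ) :
    diffOp (T v q) (T v f) = T v (diffOp q f) := by
  induction q using MvPolynomial.induction_on generalizing f with
  | C a =>
    have hC : (T v) (C a) = C a := aeval_C _ a
    have hd : ∀ g : MvPolynomial (Fin r) ℝ, diffOp (C a) g = a • g := by
      intro g
      rw [C_apply, diffOp_monomial_left, apD_zero_eq]
    rw [hC, hd, hd, map_smul]
  | add p q ihp ihq =>
    rw [map_add, diffOp_add_left, ihp, ihq, ← map_add, ← diffOp_add_left]
  | mul_X q n ih =>
    rw [map_mul, T_X, diffOp_mul_left, diffOp_mul_left, diffOp_X,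
      diffOp_linForm, chain v horth, ih]

end ApolarAux

namespace ApolarAux
open MvPolynomial Finsupp
variable {r : ℕ}

/-- The multilinear part of a polynomial. -/
noncomputable def ML (g : MvPolynomial (Fin r) ℝ) : MvPolynomial (Fin r) ℝ :=
  ∑ μ ∈ g.support, if (∀ i, μ i ≤ 1) then monomial μ (g.coeff μ) else 0

lemma coeff_ML (τ : Fin r →₀ ℕ) (g : MvPolynomial (Fin r) ℝ) :
    coeff τ (ML g) = if (∀ i, τ i ≤ 1) then g.coeff τ else 0 := by
  classical
  unfold ML
  rw [coeff_sum]
  rw [Finset.sum_eq_single τ (fun μ _ hne => ?_) (fun hns => ?_)]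
  · split_ifs with h
    · rw [coeff_monomial, if_pos rfl]
    · rw [coeff_zero]
  · split_ifs with h
    · rw [coeff_monomial, if_neg hne]
    · rw [coeff_zero]
  · rw [MvPolynomial.notMem_support_iff] at hns
    split_ifs with h
    · rw [hns, map_zero, coeff_zero]
    · rw [coeff_zero]
end ApolarAux

namespace ApolarAux
open MvPolynomial Finsupp
variable {r : ℕ}

lemma apD_two_ML (i : Fin r) (g : MvPolynomial (Fin r) ℝ) :
    apD (Finsupp.single i 2) (ML g) = 0 := by
  apply MvPolynomial.ext; intro τ
  rw [coeff_apD, coeff_zero, coeff_ML]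
  rw [if_neg, zero_mul]
  intro h
  have := h i
  simp [Finsupp.add_apply, Finsupp.single_apply] at this

lemma mem_span_sq (q : MvPolynomial (Fin r) ℝ)
    (hq : ∀ μ ∈ q.support, ∃ i, 2 ≤ μ i) :
    q ∈ Ideal.span (Set.range fun i : Fin r => (X i : MvPolynomial (Fin r) ℝ) ^ 2) := by
  rw [q.as_sum]
  refine Ideal.sum_mem _ fun μ hμ => ?_
  obtain ⟨i, hi⟩ := hq μ hμ
  have hle : Finsupp.single i 2 ≤ μ := Finsupp.single_le_iff.mpr hi
  have key : (monomial μ) (coeff μ q) =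
      monomial (μ - Finsupp.single i 2) (coeff μ q) * (X i) ^ 2 := by
    have : ((X i : MvPolynomial (Fin r) ℝ)) ^ 2 = monomial (Finsupp.single i 2) 1 := by
      rw [X_pow_eq_monomial]
    rw [this, monomial_mul, mul_one, tsub_add_cancel_of_le hle]
  rw [key]
  exact Ideal.mul_mem_left _ _ (Ideal.subset_span ⟨i, rfl⟩)

lemma sub_ML_mem (g : MvPolynomial (Fin r) ℝ) :
    g - ML g ∈ Ideal.span (Set.range fun i : Fin r => (X i : MvPolynomial (Fin r) ℝ) ^ 2) := by
  refine mem_span_sq _ fun μ hμ => ?_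
  rw [MvPolynomial.mem_support_iff, coeff_sub, coeff_ML] at hμ
  by_contra hc
  push_neg at hc
  have : ∀ i, μ i ≤ 1 := fun i => by have := hc i; omega
  rw [if_pos this, sub_self] at hμ
  exact hμ rfl

/-- The all-ones exponent. -/
noncomputable def uu (r : ℕ) : Fin r →₀ ℕ := Finsupp.equivFunOnFinite.symm (fun _ => 1)

lemma uu_apply (i : Fin r) : uu r i = 1 := rfl

lemma prod_X_eq : (∏ i : Fin r, (X i : MvPolynomial (Fin r) ℝ)) = monomial (uu r) 1 := by
  have h1 : ∀ i : Fin r, (X i : MvPolynomial (Fin r) ℝ) = monomial (Finsupp.single i 1) 1 := by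
    intro i; rfl
  simp_rw [h1]
  have h2 : ∀ s : Finset (Fin r), (∏ i ∈ s, (monomial (Finsupp.single i 1) (1:ℝ))) =
      monomial (∑ i ∈ s, Finsupp.single i 1) 1 := by
    intro s
    classical
    induction s using Finset.induction_on with
    | empty => simp [monomial_zero']
    | insert _ _ hns ih =>
      rw [Finset.prod_insert hns, Finset.sum_insert hns, ih, monomial_mul, one_mul]
  rw [h2]
  have h3 : (∑ i : Fin r, Finsupp.single i (1:ℕ)) = uu r := by
    ext j
    rw [Finsupp.finset_sum_apply, uu_apply]
    rw [Finset.sum_eq_single j (fun i _ hne => Finsupp.single_eq_of_ne' hne)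
      (fun h => absurd (Finset.mem_univ j) h), Finsupp.single_eq_same]
  rw [h3]
end ApolarAux

namespace ApolarAux
open MvPolynomial Finsupp
variable {r : ℕ} (v : Fin r → Fin r → ℝ)

lemma col_orth (horth : ∀ i j : Fin r, (∑ k : Fin r, v i k * v j k) = if i = j then (1 : ℝ) else 0)
    (i k : Fin r) : (∑ j : Fin r, v j i * v j k) = if i = k then (1 : ℝ) else 0 := by
  classical
  let M : Matrix (Fin r) (Fin r) ℝ := Matrix.of v
  have h1 : M * M.transpose = 1 := by
    ext a b
    rw [Matrix.mul_apply, Matrix.one_apply]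
    simpa [M, Matrix.transpose_apply] using horth a b
  have h2 : M.transpose * M = 1 := mul_eq_one_comm.mp h1
  have h3 := congrFun (congrFun h2 i) k
  rw [Matrix.mul_apply, Matrix.one_apply] at h3
  simpa [M, Matrix.transpose_apply] using h3

lemma aeval_eq_eval' (z : Fin r → ℝ) (f : MvPolynomial (Fin r) ℝ) :
    aeval z f = eval z f := RingHom.congr_fun (coe_aeval_eq_eval z) f

lemma eval_linForm (z : Fin r → ℝ) (i : Fin r) :
    eval z (linForm v i) = ∑ j : Fin r, v i j * z j := by
  unfold linForm
  rw [eval_sum]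
  refine Finset.sum_congr rfl fun j _ => ?_
  rw [map_mul, eval_C, eval_X]

lemma eval_T (z : Fin r → ℝ) (f : MvPolynomial (Fin r) ℝ) :
    eval z (T v f) = eval (fun i => ∑ j : Fin r, v i j * z j) f := by
  rw [← aeval_eq_eval' z (T v f)]
  unfold T
  rw [comp_aeval_apply (linForm v) (aeval z : MvPolynomial (Fin r) ℝ →ₐ[ℝ] ℝ)]
  have hfe : (fun i => aeval z (linForm v i)) = fun i => ∑ j : Fin r, v i j * z j :=
    funext fun i => by rw [aeval_eq_eval', eval_linForm]
  rw [hfe, aeval_eq_eval']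

lemma T_linForm_transpose
    (horth : ∀ i j : Fin r, (∑ k : Fin r, v i k * v j k) = if i = j then (1 : ℝ) else 0)
    (i : Fin r) : T v (linForm (fun a b => v b a) i) = X i := by
  have step1 : T v (linForm (fun a b => v b a) i) =
      ∑ j : Fin r, C (v j i) * linForm v j := by
    unfold T linForm
    rw [map_sum]
    refine Finset.sum_congr rfl fun j _ => ?_
    rw [map_mul, aeval_C, aeval_X]
    rfl
  rw [step1]
  have step2 : ∀ j : Fin r, C (v j i) * linForm v j =
      ∑ k : Fin r, C (v j i * v j k) * X k := by
    intro j
    unfold linForm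
    rw [Finset.mul_sum]
    refine Finset.sum_congr rfl fun k _ => ?_
    rw [← mul_assoc, ← C_mul]
  simp_rw [step2]
  rw [Finset.sum_comm]
  have step3 : ∀ k : Fin r, (∑ j : Fin r, C (v j i * v j k) * X k) =
      C (if i = k then (1:ℝ) else 0) * X k := by
    intro k
    rw [← Finset.sum_mul, ← map_sum, col_orth v horth]
  simp_rw [step3]
  rw [Finset.sum_eq_single i (fun k _ hne => by rw [if_neg fun h => hne h.symm, map_zero, zero_mul])
    (fun h => absurd (Finset.mem_univ i) h), if_pos rfl, map_one, one_mul]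

lemma T_S (horth : ∀ i j : Fin r, (∑ k : Fin r, v i k * v j k) = if i = j then (1 : ℝ) else 0)
    (p : MvPolynomial (Fin r) ℝ) :
    T v (T (fun a b => v b a) p) = p := by
  have h0 : T (fun a b => v b a) p = aeval (linForm fun a b => v b a) p := rfl
  rw [h0]
  rw [comp_aeval_apply (linForm fun a b => v b a) (T v)]
  have hfe : (fun i => T v (linForm (fun a b => v b a) i)) = X :=
    funext fun i => by exact T_linForm_transpose v horth i
  rw [hfe, aeval_X_left_apply]

end ApolarAux

namespace ApolarAux
open MvPolynomial Finsupp
variable {r : ℕ}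

lemma key_eval (g : MvPolynomial (Fin r) ℝ) (y : Fin r → ℝ) (hy : ∀ i, y i ≠ 0) :
    (∏ i : Fin r, y i) *
      eval (fun i => (y i)⁻¹) (diffOp g (∏ i : Fin r, (X i : MvPolynomial (Fin r) ℝ))) =
    eval y (ML g) := by
  rw [prod_X_eq, diffOp_eq]
  have hterm : ∀ μ : Fin r →₀ ℕ, apD μ (monomial (uu r) (1:ℝ)) =
      monomial (uu r - μ) (∏ i : Fin r, ((1:ℕ).descFactorial (μ i) : ℝ)) := by
    intro μ
    rw [apD_monomial, one_mul]
    congr 1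
  simp_rw [hterm]
  rw [map_sum, Finset.mul_sum]
  unfold ML
  rw [map_sum]
  refine Finset.sum_congr rfl fun μ _ => ?_
  rw [smul_eq_C_mul, map_mul, eval_C, eval_monomial]
  rw [Finsupp.prod_fintype _ _ (fun i => pow_zero _)]
  rw [← mul_assoc, mul_comm (∏ i : Fin r, y i) (coeff μ g), mul_assoc]
  have core : (∏ i : Fin r, y i) *
      ((∏ i : Fin r, ((1:ℕ).descFactorial (μ i) : ℝ)) *
        ∏ i : Fin r, ((y i)⁻¹) ^ ((uu r - μ) i)) =
      if (∀ i, μ i ≤ 1) then ∏ i : Fin r, (y i) ^ (μ i) else 0 := by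
    rw [← Finset.prod_mul_distrib, ← Finset.prod_mul_distrib]
    by_cases h : ∀ i, μ i ≤ 1
    · rw [if_pos h]
      refine Finset.prod_congr rfl fun i _ => ?_
      have hsub : (uu r - μ) i = 1 - μ i := by
        rw [Finsupp.tsub_apply, uu_apply]
      rw [hsub]
      rcases Nat.le_one_iff_eq_zero_or_eq_one.mp (h i) with h0 | h1
      · rw [h0]
        simp [mul_inv_cancel₀ (hy i)]
      · rw [h1]
        simp
    · rw [if_neg h]
      push_neg at h
      obtain ⟨i, hi⟩ := h
      refine Finset.prod_eq_zero (Finset.mem_univ i) ?_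
      have : ((1:ℕ).descFactorial (μ i) : ℝ) = 0 := by
        norm_cast
        exact Nat.descFactorial_eq_zero_iff_lt.mpr (by omega)
      rw [this, zero_mul, mul_zero]
  rw [core]
  rw [mul_ite, mul_zero]
  split_ifs with h
  · rw [eval_monomial, Finsupp.prod_fintype _ _ (fun i => pow_zero _)]
  · rw [map_zero]

end ApolarAux

open MvPolynomial ApolarAux in
/-- Let `v_1, …, v_r` be an orthonormal basis of `ℝ^r`, let
`φ(z) = ∏ᵢ ⟨v_i, z⟩`, and define the Kelvin transform `K[f](z) = φ(z)·f(Σᵢ ⟨v_i,z⟩⁻¹ v_i)`.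
Then for any polynomial `p`, the apolar projection of `p` onto the multiharmonic subspace
`{q : ⟨v_i,∂⟩² q = 0 ∀ i}` equals `K[p(∂)φ]`: i.e. there is a polynomial `h` which is
multiharmonic, differs from `p` by an element of the ideal generated by the `⟨v_i,z⟩²`
(this characterizes the apolar projection), and agrees with `K[p(∂)φ]` wherever the latter
is defined. -/
theorem apolar_projection_eq_kelvin
    (r : ℕ) (v : Fin r → Fin r → ℝ)
    (horth : ∀ i j : Fin r, (∑ k : Fin r, v i k * v j k) = if i = j then (1 : ℝ) else 0)
    (p : MvPolynomial (Fin r) ℝ) :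
    ∃ h : MvPolynomial (Fin r) ℝ,
      (∀ i : Fin r, diffOp ((linForm v i) ^ 2) h = 0) ∧
      (p - h ∈ Ideal.span (Set.range fun i : Fin r => (linForm v i) ^ 2)) ∧
      (∀ z : Fin r → ℝ, (∀ i : Fin r, (∑ j : Fin r, v i j * z j) ≠ 0) →
        MvPolynomial.eval z h =
          (∏ i : Fin r, ∑ j : Fin r, v i j * z j) *
            MvPolynomial.eval (fun kk : Fin r => ∑ i : Fin r, (∑ j : Fin r, v i j * z j)⁻¹ * v i kk)
              (diffOp p (∏ i : Fin r, linForm v i))) := by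
  classical
  set g : MvPolynomial (Fin r) ℝ := ApolarAux.T (fun a b => v b a) p with hg
  have hp : ApolarAux.T v g = p := ApolarAux.T_S v horth p
  refine ⟨ApolarAux.T v (ML g), ?_, ?_, ?_⟩
  · intro i
    have h1 : (linForm v i) ^ 2 = ApolarAux.T v ((X i) ^ 2) := by
      rw [map_pow, ApolarAux.T_X]
    rw [h1, ApolarAux.equiv v horth]
    have h2 : diffOp ((X i : MvPolynomial (Fin r) ℝ) ^ 2) (ML g) = 0 := by
      rw [X_pow_eq_monomial, diffOp_monomial_left, apD_two_ML, smul_zero]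
    rw [h2, map_zero]
  · have heq : p - ApolarAux.T v (ML g) = ApolarAux.T v (g - ML g) := by
      rw [map_sub, hp]
    rw [heq]
    have h2 : ApolarAux.T v (g - ML g) ∈ Ideal.map (ApolarAux.T v)
        (Ideal.span (Set.range fun i : Fin r => (X i : MvPolynomial (Fin r) ℝ) ^ 2)) :=
      Ideal.mem_map_of_mem _ (sub_ML_mem g)
    rw [Ideal.map_span] at h2
    have h3 : (ApolarAux.T v) '' (Set.range fun i : Fin r =>
        (X i : MvPolynomial (Fin r) ℝ) ^ 2) = Set.range fun i : Fin r => (linForm v i) ^ 2 := by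
      rw [← Set.range_comp]
      refine congrArg Set.range (funext fun i => ?_)
      show ApolarAux.T v ((X i) ^ 2) = _
      rw [map_pow, ApolarAux.T_X]
    rwa [h3] at h2
  · intro z hz
    set y : Fin r → ℝ := fun i => ∑ j : Fin r, v i j * z j with hy
    rw [ApolarAux.eval_T]
    have hφ : (∏ i : Fin r, linForm v i) = ApolarAux.T v (∏ i : Fin r, X i) := by
      rw [map_prod]
      exact Finset.prod_congr rfl fun i _ => (ApolarAux.T_X v i).symm
    have hfac : diffOp p (∏ i : Fin r, linForm v i) =
        ApolarAux.T v (diffOp g (∏ i : Fin r, (X i : MvPolynomial (Fin r) ℝ))) := by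
      rw [hφ, ← hp, ApolarAux.equiv v horth]
    rw [hfac, ApolarAux.eval_T]
    have hw : (fun i => ∑ k : Fin r, v i k * (∑ j2 : Fin r, (y j2)⁻¹ * v j2 k)) =
        fun i => (y i)⁻¹ := by
      funext i
      have e1 : ∀ k : Fin r, v i k * (∑ j2 : Fin r, (y j2)⁻¹ * v j2 k) =
          ∑ j2 : Fin r, (y j2)⁻¹ * (v i k * v j2 k) := by
        intro k
        rw [Finset.mul_sum]
        exact Finset.sum_congr rfl fun j2 _ => by ring
      simp_rw [e1]
      rw [Finset.sum_comm]
      have e2 : ∀ j2 : Fin r, (∑ k : Fin r, (y j2)⁻¹ * (v i k * v j2 k)) =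
          (y j2)⁻¹ * (if i = j2 then (1:ℝ) else 0) := by
        intro j2
        rw [← Finset.mul_sum, horth i j2]
      simp_rw [e2]
      rw [Finset.sum_eq_single i (fun j2 _ hne => by rw [if_neg fun hh => hne hh.symm, mul_zero])
        (fun hh => absurd (Finset.mem_univ i) hh), if_pos rfl, mul_one]
    rw [hw]
    exact (key_eval g y hz).symm
end

section
/- For any positive integers N, d and any d' ≤ d, Σ_{s ∈ [N]^{2d'}} N^{−|set(s)|} ≤ Σ_{k=1}^{2d'} k^{2d'}/k! ≤ (2d')^{2d'} and in particular ( Σ_{s ∈ [N]^{2d'}} N^{−|set(s)|} )^{1/2} ≤ (2d)^d, where |set(s)| denotes the number of distinct entries of the tuple s. -/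
open scoped BigOperators

/-- For positive integers `N`, `d` and any positive `d' ≤ d`,
`Σ_{s ∈ [N]^{2d'}} N^{−|set(s)|} ≤ Σ_{k=1}^{2d'} k^{2d'}/k! ≤ (2d')^{2d'}`, and in particular
`(Σ_{s ∈ [N]^{2d'}} N^{−|set(s)|})^{1/2} ≤ (2d)^d`, where `|set(s)|` is the number of distinct
entries of the tuple `s`. -/
theorem sum_inv_pow_card_image_le
    (N d d' : ℕ) (hN : 0 < N) (hd : 0 < d) (hd' : 0 < d') (hdd : d' ≤ d) :
    (∑ s : Fin (2 * d') → Fin N, ((N : ℝ) ^ (Finset.univ.image s).card)⁻¹) ≤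
        (∑ k ∈ Finset.Icc 1 (2 * d'), (k : ℝ) ^ (2 * d') / (Nat.factorial k : ℝ)) ∧
      (∑ k ∈ Finset.Icc 1 (2 * d'), (k : ℝ) ^ (2 * d') / (Nat.factorial k : ℝ)) ≤
        ((2 * d' : ℕ) : ℝ) ^ (2 * d') ∧
      Real.sqrt (∑ s : Fin (2 * d') → Fin N, ((N : ℝ) ^ (Finset.univ.image s).card)⁻¹) ≤
        ((2 * d : ℕ) : ℝ) ^ d := by
  classical
  set m := 2 * d' with hm
  have hm0 : 0 < m := by positivity
  have hNR : (0 : ℝ) < N := by exact_mod_cast hN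
  -- counting bound: number of tuples with image of size k is at most C(N,k)·k^m
  have hcount : ∀ k : ℕ, ((Finset.univ : Finset (Fin m → Fin N)).filter
      (fun s => (Finset.univ.image s).card = k)).card ≤ N.choose k * k ^ m := by
    intro k
    have hmaps : ∀ s ∈ (Finset.univ : Finset (Fin m → Fin N)).filter
        (fun s => (Finset.univ.image s).card = k),
        Finset.univ.image s ∈ Finset.powersetCard k (Finset.univ : Finset (Fin N)) := by
      intro s hs
      rw [Finset.mem_filter] at hs
      exact Finset.mem_powersetCard.2 ⟨Finset.subset_univ _, hs.2⟩
    rw [Finset.card_eq_sum_card_fiberwise hmaps]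
    calc ∑ T ∈ Finset.powersetCard k (Finset.univ : Finset (Fin N)),
          (((Finset.univ : Finset (Fin m → Fin N)).filter
            (fun s => (Finset.univ.image s).card = k)).filter
              (fun s => Finset.univ.image s = T)).card
        ≤ ∑ T ∈ Finset.powersetCard k (Finset.univ : Finset (Fin N)), k ^ m := by
          refine Finset.sum_le_sum fun T hT => ?_
          have hTk : T.card = k := (Finset.mem_powersetCard.1 hT).2
          have hsub : (((Finset.univ : Finset (Fin m → Fin N)).filter
              (fun s => (Finset.univ.image s).card = k)).filter
                (fun s => Finset.univ.image s = T)) ⊆ Fintype.piFinset (fun _ : Fin m => T) := by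
            intro s hs
            rw [Finset.mem_filter] at hs
            refine Fintype.mem_piFinset.2 fun i => ?_
            rw [← hs.2]
            exact Finset.mem_image_of_mem s (Finset.mem_univ i)
          calc _ ≤ (Fintype.piFinset (fun _ : Fin m => T)).card := Finset.card_le_card hsub
            _ = k ^ m := by
              rw [Fintype.card_piFinset]
              simp [hTk]
      _ = N.choose k * k ^ m := by
          rw [Finset.sum_const, Finset.card_powersetCard, Finset.card_univ, Fintype.card_fin,
            smul_eq_mul]
  -- first inequality
  have h1 : (∑ s : Fin m → Fin N, ((N : ℝ) ^ (Finset.univ.image s).card)⁻¹) ≤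
      ∑ k ∈ Finset.Icc 1 m, (k : ℝ) ^ m / (Nat.factorial k : ℝ) := by
    have hmaps : ∀ s ∈ (Finset.univ : Finset (Fin m → Fin N)),
        (Finset.univ.image s).card ∈ Finset.Icc 1 m := by
      intro s _
      refine Finset.mem_Icc.2 ⟨?_, ?_⟩
      · have : (Finset.univ.image s).Nonempty := by
          refine ⟨s ⟨0, hm0⟩, Finset.mem_image_of_mem s (Finset.mem_univ _)⟩
        exact Finset.card_pos.2 this
      · calc (Finset.univ.image s).card ≤ (Finset.univ : Finset (Fin m)).card :=
            Finset.card_image_le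
          _ = m := by simp
    rw [← Finset.sum_fiberwise_of_maps_to hmaps (fun s => ((N : ℝ) ^ (Finset.univ.image s).card)⁻¹)]
    refine Finset.sum_le_sum fun k hk => ?_
    have hk1 : 1 ≤ k := (Finset.mem_Icc.1 hk).1
    have hsum_eq : ∑ s ∈ (Finset.univ : Finset (Fin m → Fin N)).filter
        (fun s => (Finset.univ.image s).card = k), ((N : ℝ) ^ (Finset.univ.image s).card)⁻¹
        = ((Finset.univ : Finset (Fin m → Fin N)).filter
          (fun s => (Finset.univ.image s).card = k)).card * ((N : ℝ) ^ k)⁻¹ := by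
      rw [Finset.sum_congr rfl (fun s hs => by
        rw [(Finset.mem_filter.1 hs).2]), Finset.sum_const, nsmul_eq_mul]
    rw [hsum_eq]
    have hchoose : (N.choose k : ℝ) * (Nat.factorial k : ℝ) ≤ (N : ℝ) ^ k := by
      have := Nat.descFactorial_le_pow N k
      rw [Nat.descFactorial_eq_factorial_mul_choose] at this
      exact_mod_cast by rw [mul_comm]; exact_mod_cast this
    have hfacpos : (0 : ℝ) < (Nat.factorial k : ℝ) := by exact_mod_cast k.factorial_pos
    calc (((Finset.univ : Finset (Fin m → Fin N)).filter
          (fun s => (Finset.univ.image s).card = k)).card : ℝ) * ((N : ℝ) ^ k)⁻¹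
        ≤ ((N.choose k * k ^ m : ℕ) : ℝ) * ((N : ℝ) ^ k)⁻¹ := by
          refine mul_le_mul_of_nonneg_right ?_ (by positivity)
          exact_mod_cast hcount k
      _ = (N.choose k : ℝ) * (k : ℝ) ^ m * ((N : ℝ) ^ k)⁻¹ := by push_cast; ring
      _ ≤ ((N : ℝ) ^ k / (Nat.factorial k : ℝ)) * (k : ℝ) ^ m * ((N : ℝ) ^ k)⁻¹ := by
          refine mul_le_mul_of_nonneg_right (mul_le_mul_of_nonneg_right ?_ (by positivity))
            (by positivity)
          rw [le_div_iff₀ hfacpos]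
          exact hchoose
      _ = (k : ℝ) ^ m / (Nat.factorial k : ℝ) := by
          field_simp
  -- second inequality
  have h2 : (∑ k ∈ Finset.Icc 1 m, (k : ℝ) ^ m / (Nat.factorial k : ℝ)) ≤ ((m : ℕ) : ℝ) ^ m := by
    have hterm : ∀ k ∈ Finset.Icc 1 m, (k : ℝ) ^ m / (Nat.factorial k : ℝ) ≤
        ((m : ℕ) : ℝ) ^ (m - 1) := by
      intro k hk
      obtain ⟨hk1, hkm⟩ := Finset.mem_Icc.1 hk
      have hfacpos : (0 : ℝ) < (Nat.factorial k : ℝ) := by exact_mod_cast k.factorial_pos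
      have hkf : (k : ℝ) ≤ (Nat.factorial k : ℝ) := by exact_mod_cast Nat.self_le_factorial k
      have hkm' : (k : ℝ) ≤ (m : ℝ) := by exact_mod_cast hkm
      have : (k : ℝ) ^ m / (Nat.factorial k : ℝ)
          = (k : ℝ) ^ (m - 1) * ((k : ℝ) / (Nat.factorial k : ℝ)) := by
        rw [mul_div_assoc', ← pow_succ, Nat.sub_add_cancel hm0]
      rw [this]
      calc (k : ℝ) ^ (m - 1) * ((k : ℝ) / (Nat.factorial k : ℝ))
          ≤ (m : ℝ) ^ (m - 1) * 1 := by
            refine mul_le_mul (pow_le_pow_left₀ (by positivity) hkm' _)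
              ((div_le_one hfacpos).2 hkf) (by positivity) (by positivity)
        _ = ((m : ℕ) : ℝ) ^ (m - 1) := by rw [mul_one]
    calc (∑ k ∈ Finset.Icc 1 m, (k : ℝ) ^ m / (Nat.factorial k : ℝ))
        ≤ ∑ k ∈ Finset.Icc 1 m, ((m : ℕ) : ℝ) ^ (m - 1) := Finset.sum_le_sum hterm
      _ = m * ((m : ℕ) : ℝ) ^ (m - 1) := by
          rw [Finset.sum_const, Nat.card_Icc]
          simp [nsmul_eq_mul]
      _ = ((m : ℕ) : ℝ) ^ m := by
          rw [← pow_succ', Nat.sub_add_cancel hm0]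
  refine ⟨h1, h2, ?_⟩
  -- third inequality
  have hS : (∑ s : Fin m → Fin N, ((N : ℝ) ^ (Finset.univ.image s).card)⁻¹) ≤
      (((2 * d : ℕ) : ℝ) ^ d) ^ 2 := by
    calc _ ≤ ((m : ℕ) : ℝ) ^ m := h1.trans h2
      _ ≤ ((2 * d : ℕ) : ℝ) ^ m := by
          refine pow_le_pow_left₀ (by positivity) ?_ _
          exact_mod_cast Nat.mul_le_mul_left 2 hdd
      _ ≤ ((2 * d : ℕ) : ℝ) ^ (2 * d) := by
          refine pow_le_pow_right₀ ?_ (Nat.mul_le_mul_left 2 hdd)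
          exact_mod_cast Nat.one_le_iff_ne_zero.2 (by positivity)
      _ = (((2 * d : ℕ) : ℝ) ^ d) ^ 2 := by rw [← pow_mul, mul_comm d 2]
  calc Real.sqrt (∑ s : Fin m → Fin N, ((N : ℝ) ^ (Finset.univ.image s).card)⁻¹)
      ≤ Real.sqrt ((((2 * d : ℕ) : ℝ) ^ d) ^ 2) := Real.sqrt_le_sqrt hS
    _ = ((2 * d : ℕ) : ℝ) ^ d := Real.sqrt_sq (by positivity)
end

section
/- Let h_0(x) be a polynomial and for each set S ⊆ [N] define the Laurent pseudomoment value L(S) = 1{|S| even} · (−1)^{|S|/2}(|S|−1)!! / ∏_{1≤k≤|S|/2}(N−2k+1). Then for N odd and every nonempty even-size set S ⊆ [N], Σ_{j ∈ [N]} L(S △ {j}) = 0, where S △ {j} means: if j ∈ S remove it, else add it (so the summand is L(S ∖ {j}) for j ∈ S and L(S ∪ {j}) for j ∉ S). Equivalently, the linear functional defined on multilinear monomials by Ẽ[∏_{i∈S} x_i] = L(S), extended by x_i² = 1, satisfies Ẽ[(Σ_{i=1}^N x_i)·∏_{i∈S} x_i] = 0 for all S of odd size ≤ the degree bound. -/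
open scoped BigOperators

/-- Laurent's pseudomoment value
`L(S) = 1{|S| even} · (−1)^{|S|/2} (|S|−1)!! / ∏_{1≤k≤|S|/2} (N−2k+1)`
(with `(−1)!! = 1` and `L(S) = 0` for odd `|S|`). -/
noncomputable def laurentL (N : ℕ) (S : Finset (Fin N)) : ℝ :=
  if Even S.card then
    (-1 : ℝ) ^ (S.card / 2) * (Nat.doubleFactorial (S.card - 1) : ℝ) /
      ∏ k ∈ Finset.Icc 1 (S.card / 2), ((N : ℝ) - 2 * (k : ℝ) + 1)
  else 0

noncomputable def fL (N m : ℕ) : ℝ :=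
  if Even m then
    (-1 : ℝ) ^ (m / 2) * (Nat.doubleFactorial (m - 1) : ℝ) /
      ∏ k ∈ Finset.Icc 1 (m / 2), ((N : ℝ) - 2 * (k : ℝ) + 1)
  else 0

lemma laurentL_eq (N : ℕ) (S : Finset (Fin N)) : laurentL N S = fL N S.card := rfl

lemma key (N s t' : ℕ) (hs : s = 2 * t' + 1) (hlt : s < N) :
    (s : ℝ) * fL N (s - 1) + ((N - s : ℕ) : ℝ) * fL N (s + 1) = 0 := by
  subst hs
  have h1 : 2 * t' + 1 - 1 = 2 * t' := rfl
  have h2 : (2 * t' : ℕ) / 2 = t' := by omega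
  have h3 : (2 * t' + 1 + 1) / 2 = t' + 1 := by omega
  have heven1 : Even (2 * t') := ⟨t', by ring⟩
  have heven2 : Even (2 * t' + 1 + 1) := ⟨t' + 1, by ring⟩
  have hdf : Nat.doubleFactorial (2 * t' + 1 + 1 - 1) =
      (2 * t' + 1) * Nat.doubleFactorial (2 * t' - 1) := by
    rcases t' with _ | u
    · simp [Nat.doubleFactorial]
    · show Nat.doubleFactorial (2 * u + 1 + 2) = _
      rw [Nat.doubleFactorial_add_two]
      congr 1 <;> omega
  -- positivity of factors
  have hfac : ∀ k ∈ Finset.Icc 1 (t' + 1), (0 : ℝ) < (N : ℝ) - 2 * (k : ℝ) + 1 := by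
    intro k hk
    simp only [Finset.mem_Icc] at hk
    have hk2 : 2 * k ≤ 2 * t' + 2 := by omega
    have hN : 2 * t' + 2 ≤ N := by omega
    have : (2 * (k:ℝ)) ≤ (N : ℝ) := by
      have := Nat.cast_le (α := ℝ) |>.mpr (le_trans hk2 hN)
      push_cast at this ⊢
      linarith
    linarith
  have hP : (0:ℝ) < ∏ k ∈ Finset.Icc 1 t', ((N : ℝ) - 2 * (k : ℝ) + 1) :=
    Finset.prod_pos (fun k hk => hfac k (by simp only [Finset.mem_Icc] at hk ⊢; omega))
  have hlast : (0:ℝ) < (N : ℝ) - 2 * ((t' + 1 : ℕ) : ℝ) + 1 :=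
    hfac (t' + 1) (by simp)
  have hprodsucc : ∏ k ∈ Finset.Icc 1 (t' + 1), ((N : ℝ) - 2 * (k : ℝ) + 1) =
      (∏ k ∈ Finset.Icc 1 t', ((N : ℝ) - 2 * (k : ℝ) + 1)) *
        ((N : ℝ) - 2 * ((t' + 1 : ℕ) : ℝ) + 1) := by
    rw [Finset.prod_Icc_succ_top (by omega)]
  have hcast : ((N - (2 * t' + 1) : ℕ) : ℝ) = (N : ℝ) - 2 * ((t' + 1 : ℕ) : ℝ) + 1 := by
    push_cast [Nat.cast_sub (le_of_lt hlt)]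
    ring
  simp only [fL, h1, h2, h3, if_pos heven1, if_pos heven2, hdf, hprodsucc, hcast]
  have hPne := ne_of_gt hP
  have hlne := ne_of_gt hlast
  set P := ∏ k ∈ Finset.Icc 1 t', ((N : ℝ) - 2 * (k : ℝ) + 1) with hPdef
  set Q := (N : ℝ) - 2 * ((t' + 1 : ℕ) : ℝ) + 1 with hQdef
  rw [pow_succ, Nat.cast_mul]
  field_simp
  ring

/-- For `N` odd: (a) for every nonempty even-size set `S ⊆ [N]`,
`Σ_{j ∈ [N]} L(S △ {j}) = 0` (where `S △ {j}` removes `j` if `j ∈ S` and adjoins it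
otherwise); equivalently, (b) the linear functional defined on multilinear monomials by
`Ẽ[∏_{i∈S} x_i] = L(S)` (extended via `x_i² = 1`) satisfies
`Ẽ[(Σ_i x_i)·∏_{i∈S} x_i] = Σ_{j ∈ [N]} L(S △ {j}) = 0` for all `S` of odd size `≤ N − 1`. -/
theorem laurent_parity_recurrence (N : ℕ) (hN : Odd N) :
    (∀ S : Finset (Fin N), S.Nonempty → Even S.card →
        (∑ j : Fin N, laurentL N (if j ∈ S then S.erase j else insert j S)) = 0) ∧
      (∀ S : Finset (Fin N), Odd S.card → S.card < N →
        (∑ j : Fin N, laurentL N (if j ∈ S then S.erase j else insert j S)) = 0) := by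
  constructor
  · intro S hne hev
    apply Finset.sum_eq_zero
    intro j _
    by_cases hj : j ∈ S
    · rw [if_pos hj, laurentL_eq, Finset.card_erase_of_mem hj, fL, if_neg]
      rw [Nat.even_sub (Finset.card_pos.mpr hne)]
      simpa using hev
    · rw [if_neg hj, laurentL_eq, Finset.card_insert_of_notMem hj, fL, if_neg]
      simpa [Nat.even_add_one] using hev
  · intro S hodd hlt
    obtain ⟨t', ht'⟩ := hodd
    have hsum : ∀ j : Fin N,
        laurentL N (if j ∈ S then S.erase j else insert j S) =
        if j ∈ S then fL N (S.card - 1) else fL N (S.card + 1) := by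
      intro j
      by_cases hj : j ∈ S
      · rw [if_pos hj, if_pos hj, laurentL_eq, Finset.card_erase_of_mem hj]
      · rw [if_neg hj, if_neg hj, laurentL_eq, Finset.card_insert_of_notMem hj]
    simp only [hsum]
    rw [Finset.sum_ite, Finset.sum_const, Finset.sum_const]
    have hfil1 : (Finset.univ.filter (· ∈ S)) = S := by simp
    have hfil2 : (Finset.univ.filter (· ∉ S)).card = N - S.card := by
      rw [Finset.filter_not, Finset.card_sdiff_of_subset (by simp [hfil1, Finset.subset_univ])]
      simp [hfil1]
    rw [hfil1, hfil2]
    have := key N S.card t' ht' hlt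
    simpa [nsmul_eq_mul] using this
end
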